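/- Conversely: let A be finite nonempty, Q, Q' : A → ℝ, and suppose C(a,o), C'(a,o) are nonempty for all a, o. If the sets {(a,g) : a ∈ argmax Q, ∀o, g(o) ∈ C(a,o)} and {(a,g) : a ∈ argmax Q', ∀o, g(o) ∈ C'(a,o)} are equal and nonempty, then argmax Q = argmax Q', and for every a in the common argmax and every o, C(a,o) = C'(a,o). -/
import Mathlib


theorem bellman_backup_converse
    (A O S : Type*) [Fintype A] [Nonempty A] [Fintype O] [Nonempty O]
    (Q Q' : A → ℝ) (C C' : A → O → Set S)
    (hC : ∀ a o, (C a o).Nonempty) (hC' : ∀ a o, (C' a o).Nonempty)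
    (heq : {s : A × (O → S) | (∀ b, Q b ≤ Q s.1) ∧ ∀ o, s.2 o ∈ C s.1 o} =
      {s : A × (O → S) | (∀ b, Q' b ≤ Q' s.1) ∧ ∀ o, s.2 o ∈ C' s.1 o})
    (hne : {s : A × (O → S) | (∀ b, Q b ≤ Q s.1) ∧ ∀ o, s.2 o ∈ C s.1 o}.Nonempty) :
    {a : A | ∀ b, Q b ≤ Q a} = {a : A | ∀ b, Q' b ≤ Q' a} ∧
      ∀ a : A, (∀ b, Q b ≤ Q a) → ∀ o : O, C a o = C' a o := by
  have h1 : ∀ a : A, (∀ b, Q b ≤ Q a) → (∀ b, Q' b ≤ Q' a) := by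
    intro a ha
    have hmem : (a, fun o => (hC a o).choose) ∈
        {s : A × (O → S) | (∀ b, Q b ≤ Q s.1) ∧ ∀ o, s.2 o ∈ C s.1 o} :=
      ⟨ha, fun o => (hC a o).choose_spec⟩
    rw [heq] at hmem
    exact hmem.1
  have h2 : ∀ a : A, (∀ b, Q' b ≤ Q' a) → (∀ b, Q b ≤ Q a) := by
    intro a ha
    have hmem : (a, fun o => (hC' a o).choose) ∈
        {s : A × (O → S) | (∀ b, Q' b ≤ Q' s.1) ∧ ∀ o, s.2 o ∈ C' s.1 o} :=
      ⟨ha, fun o => (hC' a o).choose_spec⟩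
    rw [← heq] at hmem
    exact hmem.1
  refine ⟨Set.ext fun a => ⟨h1 a, h2 a⟩, fun a ha o => Set.ext fun s => ?_⟩
  classical
  constructor
  · intro hs
    have hmem : (a, fun o' => if o' = o then s else (hC a o').choose) ∈
        {s : A × (O → S) | (∀ b, Q b ≤ Q s.1) ∧ ∀ o, s.2 o ∈ C s.1 o} := by
      refine ⟨ha, fun o' => ?_⟩
      by_cases h : o' = o
      · subst h; simpa using hs
      · simp only [h, if_neg, not_false_iff]; exact (hC a o').choose_spec
    rw [heq] at hmem
    simpa using hmem.2 o
  · intro hs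
    have hmem : (a, fun o' => if o' = o then s else (hC' a o').choose) ∈
        {s : A × (O → S) | (∀ b, Q' b ≤ Q' s.1) ∧ ∀ o, s.2 o ∈ C' s.1 o} := by
      refine ⟨h1 a ha, fun o' => ?_⟩
      by_cases h : o' = o
      · subst h; simpa using hs
      · simp only [h, if_neg, not_false_iff]; exact (hC' a o').choose_spec
    rw [← heq] at hmem
    simpa using hmem.2 o
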